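/- arXiv:2410.04706 — 2 statements merged into one kernel-verified Lean document; each statement's English description precedes it below -/
import Mathlib

section
/- Let X and Y be Banach spaces and let x ∈ S_X be a ccs-Δ point. Then (x, 0) is a ccs-Δ point in X ⊕₁ Y. -/
open Metric Set Filter MeasureTheory

section Defs
variable (𝕜 : Type*) [RCLike 𝕜] {X : Type*} [NormedAddCommGroup X] [NormedSpace 𝕜 X]

/-- A slice of the closed unit ball of `X` determined by a norm-one functional and `α > 0`. -/
def IsSlice (S : Set X) : Prop :=
  ∃ (f : X →L[𝕜] 𝕜) (α : ℝ), ‖f‖ = 1 ∧ 0 < α ∧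
    S = {y | y ∈ closedBall (0:X) 1 ∧ 1 - α < RCLike.re (f y)}

/-- A convex combination of slices of the closed unit ball of `X`. -/
def IsCCS (C : Set X) : Prop :=
  ∃ (n : ℕ) (lam : Fin n → ℝ) (S : Fin n → Set X), 0 < n ∧ (∀ i, 0 < lam i) ∧
    (∑ i, lam i) = 1 ∧ (∀ i, IsSlice 𝕜 (S i)) ∧
    C = {x | ∃ y : Fin n → X, (∀ i, y i ∈ S i) ∧ x = ∑ i, (lam i : 𝕜) • y i}

/-- A set is weakly open if it is open in the weak topology on `X`. -/
def WeaklyOpen (W : Set X) : Prop := IsOpen (show Set (WeakSpace 𝕜 X) from W)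

def DaugavetPt (x : X) : Prop :=
  ‖x‖ = 1 ∧ ∀ S : Set X, IsSlice 𝕜 S → sSup ((fun y => ‖x - y‖) '' S) = 2

def NablaPt (x : X) : Prop :=
  ‖x‖ = 1 ∧ ∀ S : Set X, IsSlice 𝕜 S → x ∉ S → sSup ((fun y => ‖x - y‖) '' S) = 2

def DeltaPt (x : X) : Prop :=
  ‖x‖ = 1 ∧ ∀ S : Set X, IsSlice 𝕜 S → x ∈ S → sSup ((fun y => ‖x - y‖) '' S) = 2

def CcsDaugavetPt (x : X) : Prop :=
  ‖x‖ = 1 ∧ ∀ C : Set X, IsCCS 𝕜 C → sSup ((fun y => ‖x - y‖) '' C) = 2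

def CcsDeltaPt (x : X) : Prop :=
  ‖x‖ = 1 ∧ ∀ C : Set X, IsCCS 𝕜 C → x ∈ C → sSup ((fun y => ‖x - y‖) '' C) = 2

def SuperDaugavetPt (x : X) : Prop :=
  ‖x‖ = 1 ∧ ∀ W : Set X, WeaklyOpen 𝕜 W → (W ∩ closedBall 0 1).Nonempty →
    sSup ((fun y => ‖x - y‖) '' (W ∩ closedBall 0 1)) = 2

def SuperDeltaPt (x : X) : Prop :=
  ‖x‖ = 1 ∧ ∀ W : Set X, WeaklyOpen 𝕜 W → x ∈ W ∩ closedBall 0 1 →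
    sSup ((fun y => ‖x - y‖) '' (W ∩ closedBall 0 1)) = 2

def DentingPt (x : X) : Prop :=
  ‖x‖ = 1 ∧ ∀ ε > 0, ∃ S : Set X, IsSlice 𝕜 S ∧ x ∈ S ∧ Metric.diam S < ε

/-- `x` is a `Δ_p` point: for every slice `S(f, α)` containing `x` and every `ε > 0`, the
enlarged slice `S(f, pα)` contains a point at distance at least `2 - ε` from `x`. -/
def DeltaPPt (p : ℝ) (x : X) : Prop :=
  ‖x‖ = 1 ∧ ∀ (f : X →L[𝕜] 𝕜) (α ε : ℝ), ‖f‖ = 1 → 0 < α → 0 < ε →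
    (x ∈ closedBall (0:X) 1 ∧ 1 - α < RCLike.re (f x)) →
    ∃ u, u ∈ closedBall (0:X) 1 ∧ 1 - p * α < RCLike.re (f u) ∧ 2 - ε ≤ ‖x - u‖

/-- A measure-theoretic atom for `μ`. -/
def MeasAtom {Ω : Type*} [MeasurableSpace Ω] (μ : Measure Ω) (A : Set Ω) : Prop :=
  MeasurableSet A ∧ 0 < μ A ∧
    ∀ B ⊆ A, MeasurableSet B → μ B = 0 ∨ μ (A \ B) = 0

end Defs

section Aux
variable {𝕜 : Type*} [RCLike 𝕜] {X Y : Type*}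
  [NormedAddCommGroup X] [NormedSpace 𝕜 X]
  [NormedAddCommGroup Y] [NormedSpace 𝕜 Y]

lemma ccs_l1_norm_eq (z : WithLp 1 (X × Y)) : ‖z‖ = ‖z.fst‖ + ‖z.snd‖ := by
  rw [WithLp.prod_norm_eq_of_nat 1 (by norm_cast) z]; simp

noncomputable def ccsIota (𝕜 : Type*) [RCLike 𝕜] (X Y : Type*)
    [NormedAddCommGroup X] [NormedSpace 𝕜 X]
    [NormedAddCommGroup Y] [NormedSpace 𝕜 Y] : X →L[𝕜] WithLp 1 (X × Y) :=
  ((WithLp.prodContinuousLinearEquiv 1 𝕜 X Y).symm : (X × Y) →L[𝕜] WithLp 1 (X × Y)).comp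
    (ContinuousLinearMap.inl 𝕜 X Y)

lemma ccsIota_norm (w : X) : ‖ccsIota 𝕜 X Y w‖ = ‖w‖ := WithLp.norm_toLp_fst 1 X Y w

end Aux

lemma ccs_exists_slice {𝕜 : Type*} [RCLike 𝕜] {X : Type*} [NormedAddCommGroup X]
    [NormedSpace 𝕜 X] [CompleteSpace X] (f : X →L[𝕜] 𝕜) (α : ℝ)
    (u x₀ : X) (hx₀ : x₀ ≠ 0) (hu : ‖u‖ ≤ 1) (hcu : 1 - α < RCLike.re (f u)) :
    ∃ (h : X →L[𝕜] 𝕜) (β : ℝ), ‖h‖ = 1 ∧ 0 < β ∧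
      (u ∈ Metric.closedBall (0:X) 1 ∧ 1 - β < RCLike.re (h u)) ∧
      ∀ w : X, ‖w‖ ≤ 1 → 1 - β < RCLike.re (h w) → 1 - α < RCLike.re (f w) := by
  have humem : u ∈ Metric.closedBall (0:X) 1 := mem_closedBall_zero_iff.mpr hu
  have hcub : RCLike.re (f u) ≤ ‖f‖ := by
    calc RCLike.re (f u) ≤ ‖f u‖ := RCLike.re_le_norm _
      _ ≤ ‖f‖ * ‖u‖ := f.le_opNorm _
      _ ≤ ‖f‖ * 1 := mul_le_mul_of_nonneg_left hu (norm_nonneg _)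
      _ = ‖f‖ := mul_one _
  by_cases hf0 : f = 0
  · have hc0 : RCLike.re (f u) = 0 := by rw [hf0]; simp
    obtain ⟨g, hg1, _⟩ := exists_dual_vector 𝕜 x₀ (norm_ne_zero_iff.mpr hx₀)
    refine ⟨g, 3, hg1, by norm_num, ⟨humem, ?_⟩, fun w _ _ => ?_⟩
    · have hb1 : |RCLike.re (g u)| ≤ ‖g u‖ := RCLike.abs_re_le_norm _
      have hb2 : ‖g u‖ ≤ ‖g‖ * ‖u‖ := g.le_opNorm _
      have hb3 : ‖g‖ * ‖u‖ ≤ 1 := by rw [hg1, one_mul]; exact hu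
      have := (abs_le.mp hb1).1
      linarith
    · rw [hf0]
      simpa using by linarith [hc0, hcu]
  · have hN : 0 < ‖f‖ := norm_pos_iff.mpr hf0
    have h2N : 0 < 2 * ‖f‖ := by linarith
    have hnum : RCLike.re (f u) + (1 - α) < 2 * ‖f‖ := by linarith
    have hre : ∀ w : X, RCLike.re ((((‖f‖⁻¹ : ℝ) : 𝕜) • f) w)
        = RCLike.re (f w) / ‖f‖ := by
      intro w
      rw [ContinuousLinearMap.smul_apply, smul_eq_mul, RCLike.re_ofReal_mul,
        inv_mul_eq_div]
    refine ⟨((‖f‖⁻¹ : ℝ) : 𝕜) • f, 1 - (RCLike.re (f u) + (1 - α)) / (2 * ‖f‖),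
      ?_, ?_, ⟨humem, ?_⟩, fun w hw hsw => ?_⟩
    · rw [norm_smul (α := 𝕜) ((‖f‖⁻¹ : ℝ) : 𝕜) f, RCLike.norm_ofReal,
        abs_of_pos (inv_pos.mpr hN), inv_mul_cancel₀ hN.ne']
    · rw [sub_pos, div_lt_one h2N]; exact hnum
    · rw [hre]
      have e : 1 - (1 - (RCLike.re (f u) + (1 - α)) / (2 * ‖f‖))
          = (RCLike.re (f u) + (1 - α)) / (2 * ‖f‖) := by ring
      rw [e, div_lt_div_iff₀ h2N hN]
      nlinarith
    · rw [hre] at hsw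
      have e : (RCLike.re (f u) + (1 - α)) / (2 * ‖f‖)
          < RCLike.re (f w) / ‖f‖ := by linarith
      have hmul := (div_lt_div_iff₀ h2N hN).mp e
      nlinarith


/-- If `x ∈ S_X` is a ccs-Δ point, then `(x, 0)` is a ccs-Δ point of `X ⊕₁ Y`. -/
theorem ccsDelta_l1_sum {𝕜 : Type*} [RCLike 𝕜] {X Y : Type*}
    [NormedAddCommGroup X] [NormedSpace 𝕜 X] [CompleteSpace X]
    [NormedAddCommGroup Y] [NormedSpace 𝕜 Y] [CompleteSpace Y]
    (x : X) (hx : CcsDeltaPt 𝕜 x) :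
    CcsDeltaPt 𝕜 ((WithLp.equiv 1 (X × Y)).symm (x, 0)) := by
  obtain ⟨hxn, hxccs⟩ := hx
  have hX0 : ‖(WithLp.equiv 1 (X × Y)).symm (x, (0:Y))‖ = 1 := by
    exact (WithLp.norm_toLp_fst 1 X Y x).trans hxn
  refine ⟨hX0, ?_⟩
  intro C hC hmemC
  set ι : X →L[𝕜] WithLp 1 (X × Y) := ccsIota 𝕜 X Y with hιdef
  set X0 : WithLp 1 (X × Y) := (WithLp.equiv 1 (X × Y)).symm (x, 0) with hX0def
  obtain ⟨n, lam, S, hn, hlam, hlamsum, hslice, hCdef⟩ := hC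
  choose F α hF hα hSdef using hslice
  rw [hCdef] at hmemC
  obtain ⟨z, hz, hzeq⟩ := hmemC
  have hzball : ∀ i, ‖z i‖ ≤ 1 := by
    intro i
    have := hz i; rw [hSdef i] at this
    simpa [mem_closedBall_zero_iff] using this.1
  have hzsl : ∀ i, 1 - α i < RCLike.re (F i (z i)) := by
    intro i
    have := hz i; rw [hSdef i] at this
    exact this.2
  -- projections
  set P : WithLp 1 (X × Y) →L[𝕜] X :=
    (ContinuousLinearMap.fst 𝕜 X Y).comp
      (WithLp.prodContinuousLinearEquiv 1 𝕜 X Y).toContinuousLinearMap with hPdef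
  set Q : WithLp 1 (X × Y) →L[𝕜] Y :=
    (ContinuousLinearMap.snd 𝕜 X Y).comp
      (WithLp.prodContinuousLinearEquiv 1 𝕜 X Y).toContinuousLinearMap with hQdef
  have hu : x = ∑ i, (lam i : 𝕜) • (z i).fst := by
    have h := congrArg P hzeq
    rw [map_sum] at h
    simp only [_root_.map_smul] at h
    exact h
  have hv : (0 : Y) = ∑ i, (lam i : 𝕜) • (z i).snd := by
    have h := congrArg Q hzeq
    rw [map_sum] at h
    simp only [_root_.map_smul] at h
    exact h
  have hlamnorm : ∀ (i : Fin n) (w : X), ‖(lam i : 𝕜) • w‖ = lam i * ‖w‖ := by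
    intro i w
    rw [norm_smul, RCLike.norm_ofReal, abs_of_pos (hlam i)]
  have h1 : 1 ≤ ∑ i, lam i * ‖(z i).fst‖ := by
    calc (1:ℝ) = ‖x‖ := hxn.symm
      _ = ‖∑ i, (lam i : 𝕜) • (z i).fst‖ := by rw [← hu]
      _ ≤ ∑ i, ‖(lam i : 𝕜) • (z i).fst‖ := norm_sum_le _ _
      _ = ∑ i, lam i * ‖(z i).fst‖ :=
          Finset.sum_congr rfl fun i _ => hlamnorm i _
  have h2 : ∑ i, (lam i * ‖(z i).fst‖ + lam i * ‖(z i).snd‖) ≤ 1 := by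
    calc ∑ i, (lam i * ‖(z i).fst‖ + lam i * ‖(z i).snd‖)
        = ∑ i, lam i * ‖z i‖ := by
          refine Finset.sum_congr rfl fun i _ => ?_
          rw [ccs_l1_norm_eq]; ring
      _ ≤ ∑ i, lam i * 1 :=
          Finset.sum_le_sum fun i _ =>
            mul_le_mul_of_nonneg_left (hzball i) (hlam i).le
      _ = 1 := by simpa using hlamsum
  have hvsum : ∑ i, lam i * ‖(z i).snd‖ ≤ 0 := by
    rw [Finset.sum_add_distrib] at h2
    linarith
  have hv0 : ∀ i, (z i).snd = 0 := by
    intro i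
    have hnn : ∀ j ∈ Finset.univ (α := Fin n), 0 ≤ lam j * ‖(z j).snd‖ :=
      fun j _ => mul_nonneg (hlam j).le (norm_nonneg _)
    have hsum0 : ∑ i, lam i * ‖(z i).snd‖ = 0 :=
      le_antisymm hvsum (Finset.sum_nonneg hnn)
    have := (Finset.sum_eq_zero_iff_of_nonneg hnn).mp hsum0 i (Finset.mem_univ i)
    have hz0 : ‖(z i).snd‖ = 0 := by
      rcases mul_eq_zero.mp this with h | h
      · exact absurd h (hlam i).ne'
      · exact h
    exact norm_eq_zero.mp hz0
  have hziota : ∀ i, z i = ι ((z i).fst) := by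
    intro i
    apply (WithLp.equiv 1 (X × Y)).injective
    ext
    · rfl
    · exact hv0 i
  -- induced functionals on X
  set f : Fin n → (X →L[𝕜] 𝕜) := fun i => (F i).comp ι with hfdef
  have hιnorm : ∀ w : X, ‖ι w‖ = ‖w‖ := fun w => ccsIota_norm w
  have hufst_le : ∀ i, ‖(z i).fst‖ ≤ 1 := by
    intro i
    have e := ccs_l1_norm_eq (z i)
    have h0 := norm_nonneg (z i).snd
    have hb := hzball i
    linarith
  have hfnorm : ∀ i, ‖f i‖ ≤ 1 := by
    intro i
    refine ContinuousLinearMap.opNorm_le_bound _ zero_le_one fun w => ?_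
    calc ‖f i w‖ = ‖F i (ι w)‖ := rfl
      _ ≤ ‖F i‖ * ‖ι w‖ := (F i).le_opNorm _
      _ = 1 * ‖w‖ := by rw [hF i, hιnorm]
  have hFz : ∀ i, 1 - α i < RCLike.re (f i ((z i).fst)) := by
    intro i
    have he : f i ((z i).fst) = F i (z i) := by
      show F i (ι ((z i).fst)) = F i (z i)
      rw [← hziota i]
    rw [he]; exact hzsl i
  -- construct slices in X
  have hxne : x ≠ 0 := by intro h; rw [h] at hxn; simp at hxn
  have key : ∀ i, ∃ (h : X →L[𝕜] 𝕜) (β : ℝ), ‖h‖ = 1 ∧ 0 < β ∧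
      ((z i).fst ∈ closedBall (0:X) 1 ∧ 1 - β < RCLike.re (h ((z i).fst))) ∧
      ∀ w : X, ‖w‖ ≤ 1 → 1 - β < RCLike.re (h w) → 1 - α i < RCLike.re (f i w) :=
    fun i => ccs_exists_slice (f i) (α i) ((z i).fst) x hxne (hufst_le i) (hFz i)
  choose h β hh1 hβ hmemT hTsub using key
  set T : Fin n → Set X := fun i =>
    {w | w ∈ closedBall (0:X) 1 ∧ 1 - β i < RCLike.re (h i w)} with hTdef
  set C' : Set X :=
    {w | ∃ y : Fin n → X, (∀ i, y i ∈ T i) ∧ w = ∑ i, (lam i : 𝕜) • y i} with hC'def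
  have hCCS' : IsCCS 𝕜 C' :=
    ⟨n, lam, T, hn, hlam, hlamsum, fun i => ⟨h i, β i, hh1 i, hβ i, rfl⟩, rfl⟩
  have hxC' : x ∈ C' := ⟨fun i => (z i).fst, fun i => hmemT i, hu⟩
  have hsup' : sSup ((fun y => ‖x - y‖) '' C') = 2 := hxccs C' hCCS' hxC'
  -- bounded above by 2
  have hbdd : ∀ a ∈ (fun y => ‖X0 - y‖) '' C, a ≤ 2 := by
    rintro a ⟨w, hw, rfl⟩
    rw [hCdef] at hw
    obtain ⟨y, hy, rfl⟩ := hw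
    have hwnorm : ‖∑ i, (lam i : 𝕜) • y i‖ ≤ 1 := by
      calc ‖∑ i, (lam i : 𝕜) • y i‖ ≤ ∑ i, ‖(lam i : 𝕜) • y i‖ := norm_sum_le _ _
        _ = ∑ i, lam i * ‖y i‖ := Finset.sum_congr rfl fun i _ => by
            rw [norm_smul, RCLike.norm_ofReal, abs_of_pos (hlam i)]
        _ ≤ ∑ i, lam i * 1 := Finset.sum_le_sum fun i _ => by
            have := hy i; rw [hSdef i] at this
            exact mul_le_mul_of_nonneg_left
              (mem_closedBall_zero_iff.mp this.1) (hlam i).le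
        _ = 1 := by simpa using hlamsum
    calc ‖X0 - ∑ i, (lam i : 𝕜) • y i‖ ≤ ‖X0‖ + ‖∑ i, (lam i : 𝕜) • y i‖ :=
          norm_sub_le _ _
      _ ≤ 1 + 1 := add_le_add (le_of_eq hX0) hwnorm
      _ = 2 := by norm_num
  have hsubset : (fun y => ‖x - y‖) '' C' ⊆ (fun y => ‖X0 - y‖) '' C := by
    rintro a ⟨w, hw, rfl⟩
    obtain ⟨y, hy, hweq⟩ := hw
    refine ⟨ι w, ?_, ?_⟩
    · rw [hCdef]
      refine ⟨fun i => ι (y i), fun i => ?_, ?_⟩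
      · rw [hSdef i]
        constructor
        · rw [mem_closedBall_zero_iff, hιnorm]
          exact mem_closedBall_zero_iff.mp (hy i).1
        · have := hTsub i (y i) (mem_closedBall_zero_iff.mp (hy i).1) (hy i).2
          exact this
      · rw [hweq, map_sum]
        simp only [_root_.map_smul]
    · show ‖X0 - ι w‖ = ‖x - w‖
      have : X0 - ι w = ι (x - w) := by
        rw [map_sub]
        rfl
      rw [this, hιnorm]
  have himgne : ((fun y => ‖x - y‖) '' C').Nonempty :=
    ⟨_, mem_image_of_mem _ hxC'⟩
  apply le_antisymm
  · exact Real.sSup_le hbdd (by norm_num)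
  · calc (2:ℝ) = sSup ((fun y => ‖x - y‖) '' C') := hsup'.symm
      _ ≤ sSup ((fun y => ‖X0 - y‖) '' C) :=
          csSup_le_csSup ⟨2, fun a ha => hbdd a ha⟩ himgne hsubset
end

section
/- Let {Xₖ}ₖ∈ℕ be a countable family of Banach spaces and Z = (⊕ₖ Xₖ)_{ℓ₁}. Let xₖ ∈ S_{Xₖ} and aₖ ≥ 0 with Σ aₖ = 1. If (a₁x₁, a₂x₂, …) is a Δ point of Z, then for every k with aₖ ≠ 0, xₖ is a Δ point of Xₖ. -/
open Metric Set Filter MeasureTheory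

section DeltaDownAux

open RCLike

variable {𝕜 : Type*} [RCLike 𝕜]

/-- Near triangle-equality implies the normalized vector is far from `x`. -/
private lemma aux_far_point {E : Type*} [NormedAddCommGroup E] [NormedSpace 𝕜 E]
    (x v : E) (A δ : ℝ) (hx : ‖x‖ = 1) (hA : 0 < A) (hv : v ≠ 0)
    (hd : A + ‖v‖ - δ ≤ ‖(A : 𝕜) • x - v‖) :
    2 - δ / min A ‖v‖ ≤ ‖x - ((‖v‖⁻¹ : ℝ) : 𝕜) • v‖ := by
  have ht0 : 0 < ‖v‖ := norm_pos_iff.mpr hv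
  obtain ⟨t, htdef⟩ : ∃ t, t = ‖v‖ := ⟨_, rfl⟩
  obtain ⟨m, hmdef⟩ : ∃ m, m = min A t := ⟨_, rfl⟩
  rw [← htdef] at ht0 hd ⊢
  have hm0 : 0 < m := hmdef ▸ lt_min hA ht0
  have hmA : m ≤ A := hmdef ▸ min_le_left _ _
  have hmt : m ≤ t := hmdef ▸ min_le_right _ _
  rw [← hmdef]
  have key : (A : 𝕜) • x - v =
      (m : 𝕜) • (x - ((t⁻¹ : ℝ) : 𝕜) • v) + (((A - m) : ℝ) : 𝕜) • x
        - ((1 - m * t⁻¹ : ℝ) : 𝕜) • v := by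
    push_cast
    match_scalars <;> ring
  have hnorm1 : ‖(m : 𝕜) • (x - ((t⁻¹ : ℝ) : 𝕜) • v)‖
      = m * ‖x - ((t⁻¹ : ℝ) : 𝕜) • v‖ := by
    rw [norm_smul, RCLike.norm_ofReal, abs_of_pos hm0]
  have hnorm2 : ‖(((A - m) : ℝ) : 𝕜) • x‖ = A - m := by
    rw [norm_smul, RCLike.norm_ofReal, abs_of_nonneg (by linarith), hx, mul_one]
  have hnorm3 : ‖((1 - m * t⁻¹ : ℝ) : 𝕜) • v‖ = t - m := by
    rw [norm_smul, RCLike.norm_ofReal, abs_of_nonneg ?h, ← htdef]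
    · field_simp
    case h =>
      have : m * t⁻¹ ≤ 1 := by
        rw [← div_eq_mul_inv, div_le_one ht0]; exact hmt
      linarith
  have hle : ‖(A : 𝕜) • x - v‖ ≤ m * ‖x - ((t⁻¹ : ℝ) : 𝕜) • v‖ + (A - m) + (t - m) := by
    rw [key]
    calc ‖(m : 𝕜) • (x - ((t⁻¹ : ℝ) : 𝕜) • v) + (((A - m) : ℝ) : 𝕜) • x
        - ((1 - m * t⁻¹ : ℝ) : 𝕜) • v‖
        ≤ ‖(m : 𝕜) • (x - ((t⁻¹ : ℝ) : 𝕜) • v) + (((A - m) : ℝ) : 𝕜) • x‖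
          + ‖((1 - m * t⁻¹ : ℝ) : 𝕜) • v‖ := norm_sub_le _ _
      _ ≤ ‖(m : 𝕜) • (x - ((t⁻¹ : ℝ) : 𝕜) • v)‖ + ‖(((A - m) : ℝ) : 𝕜) • x‖
          + ‖((1 - m * t⁻¹ : ℝ) : 𝕜) • v‖ := by
            gcongr
            exact norm_add_le _ _
      _ = m * ‖x - ((t⁻¹ : ℝ) : 𝕜) • v‖ + (A - m) + (t - m) := by
            rw [hnorm1, hnorm2, hnorm3]
  have h2m : 2 * m - δ ≤ m * ‖x - ((t⁻¹ : ℝ) : 𝕜) • v‖ := by linarith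
  have hfin : (2 - δ / m) * m ≤ ‖x - ((t⁻¹ : ℝ) : 𝕜) • v‖ * m := by
    have : (2 - δ / m) * m = 2 * m - δ := by field_simp
    rw [this]
    nlinarith [h2m]
  exact le_of_mul_le_mul_right hfin hm0

variable {X : ℕ → Type*} [∀ k, NormedAddCommGroup (X k)] [∀ k, NormedSpace 𝕜 (X k)]

private lemma lp_one_summable_norm (w : lp X 1) : Summable fun j => ‖w j‖ := by
  have h := lp.memℓp w
  rw [memℓp_gen_iff (by norm_num : (0 : ℝ) < (1 : ENNReal).toReal)] at h
  simpa using h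

private lemma lp_one_norm_eq (w : lp X 1) : ‖w‖ = ∑' j, ‖w j‖ := by
  rw [lp.norm_eq_tsum_rpow (by norm_num : (0 : ℝ) < (1 : ENNReal).toReal)]
  simp

private lemma lp_one_summable_apply (G : ∀ j, X j →L[𝕜] 𝕜) (hG : ∀ j, ‖G j‖ ≤ 1)
    (w : lp X 1) : Summable fun j => G j (w j) :=
  Summable.of_norm_bounded (lp_one_summable_norm w) fun j =>
    ((G j).le_opNorm (w j)).trans (mul_le_of_le_one_left (norm_nonneg _) (hG j))

private lemma lp_one_summable_re (G : ∀ j, X j →L[𝕜] 𝕜) (hG : ∀ j, ‖G j‖ ≤ 1)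
    (w : lp X 1) : Summable fun j => RCLike.re (G j (w j)) :=
  Summable.of_norm_bounded (lp_one_summable_norm w) fun j => by
    rw [Real.norm_eq_abs]
    exact (RCLike.abs_re_le_norm _).trans
      (((G j).le_opNorm (w j)).trans (mul_le_of_le_one_left (norm_nonneg _) (hG j)))

private lemma exists_lp_functional (G : ∀ j, X j →L[𝕜] 𝕜) (hG : ∀ j, ‖G j‖ ≤ 1) :
    ∃ Φ : lp X 1 →L[𝕜] 𝕜, (∀ w, Φ w = ∑' j, G j (w j)) ∧ ‖Φ‖ ≤ 1 := by
  have hb : ∀ w : lp X 1, ∀ j, ‖G j (w j)‖ ≤ ‖w j‖ := fun w j =>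
    ((G j).le_opNorm (w j)).trans (mul_le_of_le_one_left (norm_nonneg _) (hG j))
  have hS : ∀ w : lp X 1, Summable fun j => G j (w j) := lp_one_summable_apply G hG
  let Φ₀ : lp X 1 →ₗ[𝕜] 𝕜 :=
    { toFun := fun w => ∑' j, G j (w j)
      map_add' := fun w v => by
        have h1 : ∀ j, G j ((w + v) j) = G j (w j) + G j (v j) := fun j => by
          rw [lp.coeFn_add]; simp
        show (∑' j, G j ((w + v) j)) = (∑' j, G j (w j)) + ∑' j, G j (v j)
        rw [tsum_congr h1]
        exact Summable.tsum_add (hS w) (hS v)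
      map_smul' := fun c w => by
        have h1 : ∀ j, G j ((c • w) j) = c * G j (w j) := fun j => by
          rw [lp.coeFn_smul]; simp [smul_eq_mul]
        show (∑' j, G j ((c • w) j)) = RingHom.id 𝕜 c • ∑' j, G j (w j)
        rw [tsum_congr h1, tsum_mul_left]
        simp }
  have hbound : ∀ w : lp X 1, ‖Φ₀ w‖ ≤ 1 * ‖w‖ := fun w => by
    have hSn : Summable fun j => ‖G j (w j)‖ :=
      Summable.of_nonneg_of_le (fun j => norm_nonneg _) (hb w) (lp_one_summable_norm w)
    calc ‖Φ₀ w‖ ≤ ∑' j, ‖G j (w j)‖ := norm_tsum_le_tsum_norm hSn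
      _ ≤ ∑' j, ‖w j‖ := Summable.tsum_le_tsum (hb w) hSn (lp_one_summable_norm w)
      _ = ‖w‖ := (lp_one_norm_eq w).symm
      _ = 1 * ‖w‖ := (one_mul _).symm
  exact ⟨Φ₀.mkContinuous 1 hbound, fun w => rfl,
    Φ₀.mkContinuous_norm_le zero_le_one hbound⟩

private lemma summable_ite_zero {f : ℕ → ℝ} (hf : Summable f) (k : ℕ) :
    Summable fun j => if j = k then (0 : ℝ) else f j :=
  (hf.update k 0).congr fun j => Function.update_apply f k 0 j

end DeltaDownAux

section DeltaDownCore

open RCLike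

set_option maxHeartbeats 1000000 in
private lemma delta_core {𝕜 : Type*} [RCLike 𝕜] {X : ℕ → Type*}
    [∀ k, NormedAddCommGroup (X k)] [∀ k, NormedSpace 𝕜 (X k)]
    (x : ∀ k, X k) (a : ℕ → ℝ) (hx : ∀ k, ‖x k‖ = 1) (ha : ∀ k, 0 ≤ a k)
    (hsum : HasSum a 1)
    (z : lp X 1) (hz : ∀ k, z k = (a k : 𝕜) • x k) (hΔ : DeltaPt 𝕜 z)
    (k : ℕ) (hak : 0 < a k)
    (h : X k →L[𝕜] 𝕜) (hh : ‖h‖ = 1) {α : ℝ} (hα0 : 0 < α) (hα1 : α ≤ 1)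
    (hr : 1 - α < RCLike.re (h (x k))) {ε : ℝ} (hε : 0 < ε) :
    ∃ u : X k, ‖u‖ ≤ 1 ∧ 1 - α < RCLike.re (h u) ∧ 2 - ε ≤ ‖x k - u‖ := by
  classical
  obtain ⟨hz1, hz2⟩ := hΔ
  obtain ⟨r, hrdef⟩ : ∃ r, r = RCLike.re (h (x k)) := ⟨_, rfl⟩
  rw [← hrdef] at hr
  have hxk0 : ∀ j, x j ≠ 0 := fun j h0 => by
    have := hx j; rw [h0, norm_zero] at this; norm_num at this
  have hr1 : r ≤ 1 := by
    rw [hrdef]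
    exact (RCLike.re_le_norm _).trans ((h.le_opNorm _).trans (by rw [hh, hx k, one_mul]))
  obtain ⟨γ, hγdef⟩ : ∃ y, y = r - (1 - α) := ⟨_, rfl⟩
  have hγ0 : 0 < γ := by rw [hγdef]; linarith
  have hγα : γ ≤ α := by rw [hγdef]; linarith
  have hak1 : a k ≤ 1 := by
    have h1 := Summable.le_tsum hsum.summable k fun j _ => ha j
    rwa [hsum.tsum_eq] at h1
  obtain ⟨A, hAdef⟩ : ∃ A, A = a k := ⟨_, rfl⟩
  have hA0 : 0 < A := hAdef ▸ hak
  have hA1 : A ≤ 1 := hAdef ▸ hak1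
  obtain ⟨c, hcdef⟩ : ∃ c, c = 1 - α + γ / 2 := ⟨_, rfl⟩
  have hc0 : 0 ≤ c := by rw [hcdef]; linarith
  have hc1 : c < 1 := by rw [hcdef]; linarith
  have h1c : 0 < 1 - c := by linarith
  obtain ⟨β, hβdef⟩ : ∃ b, b = A * (α - γ) + (α - γ / 2) * (1 - A) + A * γ / 4 := ⟨_, rfl⟩
  have hβ0 : 0 < β := by rw [hβdef]; nlinarith
  have hβα : β < α := by rw [hβdef]; nlinarith
  have h1cβ : 1 - c - β = A * γ / 4 := by rw [hβdef, hcdef]; ring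
  have hβ1c : β < 1 - c := by nlinarith
  obtain ⟨τ, hτdef⟩ : ∃ t, t = (A * γ / 4) / (1 - c) := ⟨_, rfl⟩
  have hτ0 : 0 < τ := hτdef ▸ div_pos (by nlinarith) h1c
  obtain ⟨m0, hm0def⟩ : ∃ m, m = min A τ := ⟨_, rfl⟩
  have hm00 : 0 < m0 := hm0def ▸ lt_min hA0 hτ0
  obtain ⟨ε', hε'def⟩ : ∃ e, e = m0 * ε / 2 := ⟨_, rfl⟩
  have hε'0 : 0 < ε' := by rw [hε'def]; positivity
  -- norming functionals
  have hgex : ∀ j, ∃ g : X j →L[𝕜] 𝕜, ‖g‖ = 1 ∧ g (x j) = (‖x j‖ : 𝕜) :=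
    fun j => exists_dual_vector 𝕜 (x j) (norm_ne_zero_iff.mpr (hxk0 j))
  choose g hg1 hg2 using hgex
  -- the functional on the sum
  obtain ⟨G, hGdef⟩ : ∃ G : ∀ j, X j →L[𝕜] 𝕜,
      G = Function.update (fun j => ((c : ℝ) : 𝕜) • g j) k h := ⟨_, rfl⟩
  have hGk : G k = h := by rw [hGdef]; simp
  have hGne : ∀ j, j ≠ k → G j = ((c : ℝ) : 𝕜) • g j := fun j hj => by
    rw [hGdef]; simp [Function.update_of_ne hj]
  have hGle : ∀ j, ‖G j‖ ≤ 1 := fun j => by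
    by_cases hj : j = k
    · subst hj; rw [hGk, hh]
    · rw [hGne j hj]
      have h1 : ‖((c : ℝ) : 𝕜) • g j‖ = ‖((c : ℝ) : 𝕜)‖ * ‖g j‖ := norm_smul ((c : ℝ) : 𝕜) (g j)
      rw [h1, RCLike.norm_ofReal, abs_of_nonneg hc0, hg1 j, mul_one]
      linarith
  obtain ⟨Φ, hΦapp, hΦle⟩ := exists_lp_functional G hGle
  have hΦ1 : ‖Φ‖ = 1 := by
    refine le_antisymm hΦle ?_
    rw [← hh]
    refine h.opNorm_le_bound (norm_nonneg Φ) fun v => ?_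
    have h1 : Φ (lp.single 1 k v) = h v := by
      rw [hΦapp]
      rw [tsum_eq_single k (fun j hj => by
        rw [lp.single_apply_ne 1 k v hj, map_zero])]
      rw [lp.single_apply_self, hGk]
    have h2 : ‖lp.single 1 k v‖ = ‖v‖ := by
      have := lp.norm_single (p := (1 : ENNReal))
        (by norm_num) k v
      exact this
    calc ‖h v‖ = ‖Φ (lp.single 1 k v)‖ := by rw [h1]
      _ ≤ ‖Φ‖ * ‖lp.single 1 k v‖ := Φ.le_opNorm _
      _ = ‖Φ‖ * ‖v‖ := by rw [h2]
  -- re of Φ applied to anything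
  have hre : ∀ w : lp X 1, RCLike.re (Φ w) = ∑' j, RCLike.re (G j (w j)) := fun w => by
    rw [hΦapp]
    have := (RCLike.reCLM (K := 𝕜)).map_tsum (lp_one_summable_apply G hGle w)
    simpa using this
  -- z belongs to the slice
  have hzball : z ∈ Metric.closedBall (0 : lp X 1) 1 :=
    mem_closedBall_zero_iff.mpr (le_of_eq hz1)
  have hreGz : ∀ j, RCLike.re (G j (z j)) =
      c * a j + (if j = k then A * r - c * A else 0) := fun j => by
    by_cases hj : j = k
    · subst hj
      rw [if_pos rfl, hGk, hz j, _root_.map_smul, smul_eq_mul, RCLike.re_ofReal_mul, ← hrdef, hAdef]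
      ring
    · rw [if_neg hj, hGne j hj]
      have e1 : (((c : ℝ) : 𝕜) • g j) (z j) = ((c : ℝ) : 𝕜) * (g j (z j)) := by
        rw [ContinuousLinearMap.smul_apply, smul_eq_mul]
      have e2 : g j (z j) = ((a j : ℝ) : 𝕜) := by
        rw [hz j, _root_.map_smul, smul_eq_mul, hg2 j, hx j, RCLike.ofReal_one, mul_one]
      rw [e1, e2, RCLike.re_ofReal_mul, RCLike.ofReal_re, add_zero]
  have hzΦre : RCLike.re (Φ z) = A * r + c * (1 - A) := by
    rw [hre z, tsum_congr hreGz,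
      Summable.tsum_add (hsum.summable.mul_left c) ⟨_, hasSum_ite_eq k (A * r - c * A)⟩,
      tsum_mul_left, hsum.tsum_eq, tsum_ite_eq]
    ring
  have hzslice : 1 - β < RCLike.re (Φ z) := by
    rw [hzΦre]
    have hexp : A * r + c * (1 - A) = 1 - β + A * γ / 4 := by
      have hrγ : r = 1 - α + γ := by rw [hγdef]; ring
      rw [hrγ, hcdef, hβdef]; ring
    nlinarith
  -- apply the Δ-point property of z
  have hT : IsSlice 𝕜 {y : lp X 1 | y ∈ Metric.closedBall (0 : lp X 1) 1
      ∧ 1 - β < RCLike.re (Φ y)} := ⟨Φ, β, hΦ1, hβ0, rfl⟩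
  have hsup := hz2 _ hT ⟨hzball, hzslice⟩
  have hlt : (2 : ℝ) - ε' < sSup ((fun y => ‖z - y‖) ''
      {y : lp X 1 | y ∈ Metric.closedBall (0 : lp X 1) 1 ∧ 1 - β < RCLike.re (Φ y)}) := by
    rw [hsup]; linarith
  obtain ⟨val, ⟨w, hwT, rfl⟩, hwgt⟩ := exists_lt_of_lt_csSup
    ⟨_, Set.mem_image_of_mem _ (show z ∈ {y : lp X 1 | y ∈ Metric.closedBall (0 : lp X 1) 1
      ∧ 1 - β < RCLike.re (Φ y)} from ⟨hzball, hzslice⟩)⟩ hlt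
  have hwgt2 : 2 - ε' < ‖z - w‖ := hwgt
  clear hwgt
  have hwball : ‖w‖ ≤ 1 := mem_closedBall_zero_iff.mp hwT.1
  have hwsl : 1 - β < RCLike.re (Φ w) := hwT.2
  -- coordinates of w
  obtain ⟨t, htdef⟩ : ∃ t, t = ‖w k‖ := ⟨_, rfl⟩
  obtain ⟨s, hsdef⟩ : ∃ s, s = ∑' j, if j = k then (0 : ℝ) else ‖w j‖ := ⟨_, rfl⟩
  have SW : Summable fun j => ‖w j‖ := lp_one_summable_norm w
  have hs0 : 0 ≤ s := hsdef ▸ tsum_nonneg fun j => by positivity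
  have hts : t + s ≤ 1 := by
    have h1 : ‖w‖ = t + s := by
      rw [lp_one_norm_eq w, Summable.tsum_eq_add_tsum_ite SW k, ← htdef, ← hsdef]
    linarith
  -- slice gives: w k nearly norms h
  have Sre : Summable fun j => RCLike.re (G j (w j)) := lp_one_summable_re G hGle w
  have hrew : RCLike.re (Φ w) = RCLike.re (h (w k))
      + ∑' j, if j = k then (0 : ℝ) else RCLike.re (G j (w j)) := by
    rw [hre w, Summable.tsum_eq_add_tsum_ite Sre k, hGk]
  have htail : (∑' j, if j = k then (0 : ℝ) else RCLike.re (G j (w j))) ≤ c * s := by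
    have S1 : Summable fun j => if j = k then (0 : ℝ) else RCLike.re (G j (w j)) :=
      summable_ite_zero Sre k
    have S2 : Summable fun j => if j = k then (0 : ℝ) else c * ‖w j‖ :=
      summable_ite_zero (SW.mul_left c) k
    have hle : ∀ j, (if j = k then (0 : ℝ) else RCLike.re (G j (w j)))
        ≤ (if j = k then (0 : ℝ) else c * ‖w j‖) := fun j => by
      by_cases hj : j = k
      · simp [hj]
      · rw [if_neg hj, if_neg hj, hGne j hj, ContinuousLinearMap.smul_apply, smul_eq_mul,
          RCLike.re_ofReal_mul]
        refine mul_le_mul_of_nonneg_left ?_ hc0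
        exact (RCLike.re_le_norm _).trans (((g j).le_opNorm _).trans
          (by rw [hg1 j, one_mul]))
    calc (∑' j, if j = k then (0 : ℝ) else RCLike.re (G j (w j)))
        ≤ ∑' j, if j = k then (0 : ℝ) else c * ‖w j‖ := Summable.tsum_le_tsum hle S1 S2
      _ = c * s := by
          rw [hsdef, ← tsum_mul_left]
          exact tsum_congr fun j => by by_cases hj : j = k <;> simp [hj]
  have hrewk : 1 - β - c * s < RCLike.re (h (w k)) := by linarith
  have hretle : RCLike.re (h (w k)) ≤ t := by
    rw [htdef]
    exact (RCLike.re_le_norm _).trans ((h.le_opNorm _).trans (by rw [hh, one_mul]))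
  have hcs : c * s ≤ c * (1 - t) := mul_le_mul_of_nonneg_left (by linarith) hc0
  have hτt : τ < t := by
    rw [hτdef, div_lt_iff₀ h1c]
    nlinarith
  have ht0 : 0 < t := hτ0.trans hτt
  have hwk0 : w k ≠ 0 := by
    rw [← norm_pos_iff]; rw [htdef] at ht0; exact ht0
  -- the k-th coordinate of w is far from z k
  have SZW : Summable fun j => ‖z j - w j‖ := by
    have h1 := lp_one_summable_norm (z - w)
    refine h1.congr fun j => ?_
    rw [lp.coeFn_sub]; simp
  have hzwnorm : ‖z - w‖ = ∑' j, ‖z j - w j‖ := by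
    rw [lp_one_norm_eq (z - w)]
    exact tsum_congr fun j => by rw [lp.coeFn_sub]; simp
  have hnz : ∀ j, ‖z j‖ = a j := fun j => by
    rw [hz j, norm_smul, RCLike.norm_ofReal, abs_of_nonneg (ha j), hx j, mul_one]
  have haite : (∑' j, if j = k then (0 : ℝ) else a j) = 1 - A := by
    have h1 := Summable.tsum_eq_add_tsum_ite hsum.summable k
    rw [hsum.tsum_eq] at h1
    rw [hAdef]
    linarith
  have htail2 : (∑' j, if j = k then (0 : ℝ) else ‖z j - w j‖) ≤ (1 - A) + s := by
    have S1 : Summable fun j => if j = k then (0 : ℝ) else ‖z j - w j‖ :=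
      summable_ite_zero SZW k
    have Sa : Summable fun j => if j = k then (0 : ℝ) else a j :=
      summable_ite_zero hsum.summable k
    have Sw' : Summable fun j => if j = k then (0 : ℝ) else ‖w j‖ :=
      summable_ite_zero SW k
    have hle : ∀ j, (if j = k then (0 : ℝ) else ‖z j - w j‖)
        ≤ (if j = k then (0 : ℝ) else a j) + (if j = k then (0 : ℝ) else ‖w j‖) := fun j => by
      by_cases hj : j = k
      · simp [hj]
      · rw [if_neg hj, if_neg hj, if_neg hj, ← hnz j]
        exact norm_sub_le _ _
    calc (∑' j, if j = k then (0 : ℝ) else ‖z j - w j‖)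
        ≤ ∑' j, ((if j = k then (0 : ℝ) else a j) + (if j = k then (0 : ℝ) else ‖w j‖)) :=
          Summable.tsum_le_tsum hle S1 (Sa.add Sw')
      _ = (1 - A) + s := by rw [Summable.tsum_add Sa Sw', haite, hsdef]
  have hzwk : A + t - ε' ≤ ‖(A : 𝕜) • x k - w k‖ := by
    have h1 : ‖z - w‖ = ‖z k - w k‖
        + ∑' j, if j = k then (0 : ℝ) else ‖z j - w j‖ := by
      rw [hzwnorm, Summable.tsum_eq_add_tsum_ite SZW k]
    have h2 : z k - w k = (A : 𝕜) • x k - w k := by rw [hz k, hAdef]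
    have hwgt' : 2 - ε' < ‖z - w‖ := hwgt2
    rw [h1, h2] at hwgt'
    linarith
  -- the candidate point
  clear hwgt2 hz2 hre hΦapp hΦle hΦ1 hzball hzslice hzΦre hsup hlt hwT hwball hwsl
    hrew htail hreGz hzwnorm haite htail2 hz1 Sre SZW hT
  refine ⟨((t⁻¹ : ℝ) : 𝕜) • w k, ?_, ?_, ?_⟩
  · rw [norm_smul, RCLike.norm_ofReal, abs_of_pos (inv_pos.mpr ht0), ← htdef,
      inv_mul_cancel₀ ht0.ne']
  · have h1 : RCLike.re (h (((t⁻¹ : ℝ) : 𝕜) • w k)) = t⁻¹ * RCLike.re (h (w k)) := by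
      rw [_root_.map_smul, smul_eq_mul, RCLike.re_ofReal_mul]
    have h2 : t⁻¹ * (1 - β - c * (1 - t)) < t⁻¹ * RCLike.re (h (w k)) := by
      refine mul_lt_mul_of_pos_left ?_ (inv_pos.mpr ht0)
      linarith
    have h3 : 1 - β ≤ t⁻¹ * (1 - β - c * (1 - t)) := by
      have hq0 : (0:ℝ) ≤ 1 - β - c := by linarith [h1cβ, mul_pos hA0 hγ0]
      have hq1 : (0:ℝ) ≤ 1 - t := by linarith
      have hq : t * (1 - β) ≤ 1 - β - c * (1 - t) := by nlinarith [mul_nonneg hq0 hq1]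
      have h4 := mul_le_mul_of_nonneg_left hq (inv_pos.mpr ht0).le
      rwa [← mul_assoc, inv_mul_cancel₀ ht0.ne', one_mul] at h4
    rw [h1]
    linarith
  · have hfar := aux_far_point (𝕜 := 𝕜) (x k) (w k) A ε' (hx k) hA0 hwk0
      (by rw [← htdef]; exact hzwk)
    rw [← htdef] at hfar
    have hminle : m0 ≤ min A t := by
      rw [hm0def]
      exact le_min (min_le_left _ _) ((min_le_right _ _).trans hτt.le)
    have hdivle : ε' / min A t ≤ ε' / m0 :=
      div_le_div_of_nonneg_left hε'0.le hm00 hminle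
    have hdiv : ε' / m0 = ε / 2 := by
      rw [hε'def]; field_simp
    have : ε' / min A t ≤ ε / 2 := by rw [← hdiv]; exact hdivle
    linarith
end DeltaDownCore

set_option maxHeartbeats 1000000 in
/-- Downward stability of Δ points in countable `ℓ₁`-sums: if `(a₁x₁, a₂x₂, …)` is a Δ point of
`(⊕ₖ Xₖ)_{ℓ₁}` with `aₖ ≥ 0`, `Σ aₖ = 1` and `xₖ ∈ S_{Xₖ}`, then `xₖ` is a Δ point of `Xₖ`
whenever `aₖ ≠ 0`. -/
theorem delta_down_l1_countable {𝕜 : Type*} [RCLike 𝕜] {X : ℕ → Type*}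
    [∀ k, NormedAddCommGroup (X k)] [∀ k, NormedSpace 𝕜 (X k)] [∀ k, CompleteSpace (X k)]
    (x : ∀ k, X k) (a : ℕ → ℝ) (hx : ∀ k, ‖x k‖ = 1) (ha : ∀ k, 0 ≤ a k)
    (hsum : HasSum a 1)
    (z : lp X 1) (hz : ∀ k, z k = (a k : 𝕜) • x k) (hΔ : DeltaPt 𝕜 z) :
    ∀ k, a k ≠ 0 → DeltaPt 𝕜 (x k) := by
  intro k hak0
  have hak : 0 < a k := lt_of_le_of_ne (ha k) (Ne.symm hak0)
  refine ⟨hx k, ?_⟩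
  intro S hS hxS
  obtain ⟨f, α, hf1, hα, rfl⟩ := hS
  obtain ⟨hxball, hxf⟩ := hxS
  have hxk0 : x k ≠ 0 := fun h0 => by
    have := hx k; rw [h0, norm_zero] at this; norm_num at this
  obtain ⟨r₀, hr₀def⟩ : ∃ r, r = RCLike.re (f (x k)) := ⟨_, rfl⟩
  rw [← hr₀def] at hxf
  have hfx1 : ‖f (x k)‖ ≤ 1 := (f.le_opNorm _).trans (by rw [hf1, hx k, one_mul])
  have hr₀le : r₀ ≤ 1 := by
    rw [hr₀def]; exact (RCLike.re_le_norm _).trans hfx1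
  have hr₀ge : -1 ≤ r₀ := by
    rw [hr₀def]
    have := (RCLike.abs_re_le_norm (f (x k))).trans hfx1
    cases abs_le.mp this with
    | intro h1 h2 => linarith
  obtain ⟨ft, hft1, hftx⟩ := exists_dual_vector 𝕜 (x k) (norm_ne_zero_iff.mpr hxk0)
  have hreftx : RCLike.re (ft (x k)) = 1 := by
    rw [hftx, hx k]; simp
  obtain ⟨h₀, hh₀def⟩ : ∃ h₀ : X k →L[𝕜] 𝕜, h₀ = f + ((2 : ℝ) : 𝕜) • ft := ⟨_, rfl⟩
  have hreh₀ : ∀ v, RCLike.re (h₀ v) = RCLike.re (f v) + 2 * RCLike.re (ft v) := fun v => by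
    rw [hh₀def]
    simp only [ContinuousLinearMap.add_apply, ContinuousLinearMap.smul_apply, map_add,
      smul_eq_mul, RCLike.re_ofReal_mul]
  obtain ⟨N, hNdef⟩ : ∃ N, N = ‖h₀‖ := ⟨_, rfl⟩
  have hN3 : N ≤ 3 := by
    rw [hNdef, hh₀def]
    refine (norm_add_le _ _).trans ?_
    have h1 : ‖((2 : ℝ) : 𝕜) • ft‖ = ‖((2 : ℝ) : 𝕜)‖ * ‖ft‖ := norm_smul ((2 : ℝ) : 𝕜) ft
    rw [h1, RCLike.norm_ofReal, hf1, hft1]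
    norm_num
  have hNge : r₀ + 2 ≤ N := by
    calc r₀ + 2 = RCLike.re (h₀ (x k)) := by rw [hreh₀, hreftx, ← hr₀def]; ring
      _ ≤ ‖h₀ (x k)‖ := RCLike.re_le_norm _
      _ ≤ ‖h₀‖ * ‖x k‖ := h₀.le_opNorm _
      _ = N := by rw [hx k, hNdef, mul_one]
  have hN0 : 0 < N := by linarith
  obtain ⟨h, hhdef⟩ : ∃ h : X k →L[𝕜] 𝕜, h = ((N⁻¹ : ℝ) : 𝕜) • h₀ := ⟨_, rfl⟩
  have hh1 : ‖h‖ = 1 := by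
    have h1 : ‖((N⁻¹ : ℝ) : 𝕜) • h₀‖ = ‖((N⁻¹ : ℝ) : 𝕜)‖ * ‖h₀‖ := norm_smul ((N⁻¹ : ℝ) : 𝕜) h₀
    rw [hhdef, h1, RCLike.norm_ofReal, abs_of_pos (inv_pos.mpr hN0), ← hNdef,
      inv_mul_cancel₀ hN0.ne']
  have hreh : ∀ v, RCLike.re (h v) = N⁻¹ * RCLike.re (h₀ v) := fun v => by
    rw [hhdef]
    simp only [ContinuousLinearMap.smul_apply, smul_eq_mul, RCLike.re_ofReal_mul]
  obtain ⟨δ, hδdef⟩ : ∃ d, d = min ((r₀ - (1 - α)) / 6) (1 / 6) := ⟨_, rfl⟩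
  have hδ0 : 0 < δ := hδdef ▸ lt_min (by linarith) (by norm_num)
  have hδ6 : δ ≤ 1 / 6 := hδdef ▸ min_le_right _ _
  have hδr : δ ≤ (r₀ - (1 - α)) / 6 := hδdef ▸ min_le_left _ _
  obtain ⟨ρ, hρdef⟩ : ∃ p, p = RCLike.re (h (x k)) := ⟨_, rfl⟩
  have hρval : ρ = N⁻¹ * (r₀ + 2) := by
    rw [hρdef, hreh, hreh₀, hreftx, ← hr₀def]; ring
  have hρle : ρ ≤ 1 := by
    rw [hρdef]
    exact (RCLike.re_le_norm _).trans ((h.le_opNorm _).trans (by rw [hh1, hx k, one_mul]))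
  have hρge : 1 / 3 ≤ ρ := by
    rw [hρval, inv_mul_eq_div, le_div_iff₀ hN0]
    linarith
  have hNρ : N * ρ = r₀ + 2 := by
    rw [hρval]; field_simp
  have healf0 : 0 < 1 - ρ + δ := by linarith
  have healf1 : 1 - ρ + δ ≤ 1 := by linarith
  have hslack : 1 - (1 - ρ + δ) < RCLike.re (h (x k)) := by
    rw [← hρdef]; linarith
  -- upper bound and nonemptiness of the image
  have hub : ∀ y ∈ (fun y => ‖x k - y‖) ''
      {y : X k | y ∈ Metric.closedBall (0 : X k) 1 ∧ 1 - α < RCLike.re (f y)}, y ≤ 2 := by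
    rintro y ⟨u, ⟨hu1, _⟩, rfl⟩
    have hu1' : ‖u‖ ≤ 1 := mem_closedBall_zero_iff.mp hu1
    calc ‖x k - u‖ ≤ ‖x k‖ + ‖u‖ := norm_sub_le _ _
      _ ≤ 2 := by rw [hx k]; linarith
  have hbdd : BddAbove ((fun y => ‖x k - y‖) ''
      {y : X k | y ∈ Metric.closedBall (0 : X k) 1 ∧ 1 - α < RCLike.re (f y)}) := ⟨2, hub⟩
  have hne : ((fun y => ‖x k - y‖) ''
      {y : X k | y ∈ Metric.closedBall (0 : X k) 1 ∧ 1 - α < RCLike.re (f y)}).Nonempty :=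
    ⟨_, Set.mem_image_of_mem _ (show x k ∈ {y : X k | y ∈ Metric.closedBall (0 : X k) 1
      ∧ 1 - α < RCLike.re (f y)} from ⟨hxball, by rw [← hr₀def]; exact hxf⟩)⟩
  refine le_antisymm (csSup_le hne hub) (le_of_forall_sub_le fun ε hε => ?_)
  obtain ⟨u, hu1, hu2, hu3⟩ := delta_core x a hx ha hsum z hz hΔ k hak h hh1
    healf0 healf1 hslack hε
  -- u lies in the original slice
  have hreft_u : RCLike.re (ft u) ≤ 1 :=
    (RCLike.re_le_norm _).trans ((ft.le_opNorm _).trans (by rw [hft1, one_mul]; exact hu1))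
  have hfu : 1 - α < RCLike.re (f u) := by
    have h1 : RCLike.re (f u) = N * RCLike.re (h u) - 2 * RCLike.re (ft u) := by
      have h2 := hreh u
      have h3 := hreh₀ u
      have h4 : N * RCLike.re (h u) = RCLike.re (h₀ u) := by
        rw [h2]; field_simp
      linarith
    have h5 : N * (1 - (1 - ρ + δ)) < N * RCLike.re (h u) :=
      mul_lt_mul_of_pos_left hu2 hN0
    have h6 : N * (ρ - δ) = r₀ + 2 - N * δ := by
      rw [mul_sub, hNρ]
    have h7 : N * δ ≤ 3 * δ := mul_le_mul_of_nonneg_right hN3 hδ0.le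
    have h8 : 1 - (1 - ρ + δ) = ρ - δ := by ring
    rw [h8] at h5
    rw [h1]
    linarith
  have humem : u ∈ {y : X k | y ∈ Metric.closedBall (0 : X k) 1
      ∧ 1 - α < RCLike.re (f y)} := ⟨mem_closedBall_zero_iff.mpr hu1, hfu⟩
  calc 2 - ε ≤ ‖x k - u‖ := hu3
    _ ≤ sSup _ := le_csSup hbdd (Set.mem_image_of_mem _ humem)
end
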